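/- arXiv:2210.02067 — 5 statements merged into one kernel-verified Lean document; each statement's English description precedes it below -/
import Mathlib

section
/- If a relation ≈ on strings satisfies the symmetric law and the two-transitive law (W≈X, X≈Y, Y≈Z implies W≈Z) and substring consistency, and P is a string with P ≈ reverse(P), and a substring P[i..j] satisfies P[i..j] ≈ reverse(P[i..j]), then the substring at the symmetric position, P[|P|-j+1..|P|-i+1], also satisfies P[|P|-j+1..|P|-i+1] ≈ reverse(P[|P|-j+1..|P|-i+1]). -/
/-!
Substring consistency applied to `P ≈ reverse P` relates every substring `P[a..b]` to the reverse
of its mirror image `P[n-b+1..n-a+1]`. Writing `A` for the mirror of `B = P[i..j]`, this gives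
`A ≈ reverse B` and `B ≈ reverse A`; together with `reverse B ≈ B` (symmetry applied to the
hypothesis on `B`), two-transitivity yields `A ≈ reverse A`.
-/

/-- `sub S i j` is the substring `S[i..j]` (1-indexed, inclusive). -/
def sub {α : Type*} (S : List α) (i j : ℕ) : List α :=
  (S.drop (i - 1)).take (j - i + 1)

theorem sub_reverse {α : Type*} (S : List α) (i j : ℕ) (h1 : 1 ≤ i) (hij : i ≤ j)
    (hj : j ≤ S.length) :
    sub S.reverse i j = (sub S (S.length - j + 1) (S.length - i + 1)).reverse := by
  unfold sub
  rw [show S.length - j + 1 - 1 = S.length - j by omega,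
    show S.length - i + 1 - (S.length - j + 1) + 1 = j - i + 1 by omega,
    List.reverse_take, List.reverse_drop, List.length_drop,
    show S.length - (S.length - j) - (j - i + 1) = i - 1 by omega,
    show S.length - (S.length - j) = j by omega, List.drop_take]
  congr 1
  omega

theorem rel_sub_reverse_sub_mirror {α : Type*} {r : List α → List α → Prop}
    (hsub : ∀ X Y : List α, r X Y → ∀ i j : ℕ, 1 ≤ i → i ≤ j → j ≤ X.length →
      r (sub X i j) (sub Y i j))
    {P : List α} (hP : r P P.reverse) {i j : ℕ} (h1 : 1 ≤ i) (hij : i ≤ j) (hj : j ≤ P.length) :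
    r (sub P i j) (sub P (P.length - j + 1) (P.length - i + 1)).reverse := by
  rw [← sub_reverse P i j h1 hij hj]
  exact hsub P P.reverse hP i j h1 hij hj

theorem stmt0 {α : Type*} (r : List α → List α → Prop)
    (hsymm : ∀ X Y : List α, r X Y → r Y X)
    (htt : ∀ W X Y Z : List α, r W X → r X Y → r Y Z → r W Z)
    (hsub : ∀ X Y : List α, r X Y → ∀ i j : ℕ, 1 ≤ i → i ≤ j → j ≤ X.length →
      r (sub X i j) (sub Y i j))
    (P : List α) (hP : r P P.reverse)
    (i j : ℕ) (h1 : 1 ≤ i) (hij : i ≤ j) (hj : j ≤ P.length)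
    (hpal : r (sub P i j) (sub P i j).reverse) :
    r (sub P (P.length - j + 1) (P.length - i + 1))
      (sub P (P.length - j + 1) (P.length - i + 1)).reverse := by
  set n := P.length
  have hAB : r (sub P (n - j + 1) (n - i + 1)) (sub P i j).reverse := by
    have h := rel_sub_reverse_sub_mirror hsub hP (i := n - j + 1) (j := n - i + 1)
      (by omega) (by omega) (by omega)
    rwa [show n - (n - i + 1) + 1 = i by omega, show n - (n - j + 1) + 1 = j by omega] at h
  have hBA := rel_sub_reverse_sub_mirror hsub hP h1 hij hj
  exact htt _ _ _ _ hAB (hsymm _ _ hpal) hBA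
end

section
/- A string P is an order-preserving rev-palindrome if and only if P is a palindrome under exact matching, i.e., P = reverse(P). -/
/-- `X` and `Y` order-preserving match. -/
def opMatch {α : Type*} [LinearOrder α] [Inhabited α] (X Y : List α) : Prop :=
  X.length = Y.length ∧
  ∀ i j, i < X.length → j < X.length →
    (X.getD i default ≤ X.getD j default ↔ Y.getD i default ≤ Y.getD j default)

/-!
Comparing position `i` with its mirror `n - 1 - i` in `P ≈op reverse P` gives
`P[i] ≤ P[n-1-i] ↔ P[n-1-i] ≤ P[i]`, which in a linear order forces `P[i] = P[n-1-i]`.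
-/

theorem eq_of_le_iff_le_swap {α : Type*} [LinearOrder α] {a b : α} (h : a ≤ b ↔ b ≤ a) :
    a = b := by
  rcases le_total a b with hab | hba
  · exact le_antisymm hab (h.mp hab)
  · exact le_antisymm (h.mpr hba) hba

section opMatch

variable {α : Type*} [LinearOrder α] [Inhabited α]

theorem opMatch_refl (X : List α) : opMatch X X :=
  ⟨rfl, fun _ _ _ _ => Iff.rfl⟩

theorem getD_eq_getD_mirror_of_opMatch_reverse {P : List α} (h : opMatch P P.reverse) {i : ℕ}
    (hi : i < P.length) : P.getD i default = P.getD (P.length - 1 - i) default := by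
  have hi' : P.length - 1 - i < P.length := by omega
  have key := h.2 i (P.length - 1 - i) hi hi'
  rw [List.getD_reverse i hi, List.getD_reverse _ hi', Nat.sub_sub_self (by omega)] at key
  exact eq_of_le_iff_le_swap key

theorem eq_reverse_of_opMatch_reverse {P : List α} (h : opMatch P P.reverse) : P = P.reverse := by
  refine List.ext_getElem List.length_reverse.symm fun i hi _ => ?_
  rw [List.getElem_reverse, ← List.getD_eq_getElem _ default hi,
    getD_eq_getD_mirror_of_opMatch_reverse h hi, List.getD_eq_getElem]

end opMatch

theorem stmt2 {α : Type*} [LinearOrder α] [Inhabited α] (P : List α) :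
    opMatch P P.reverse ↔ P = P.reverse :=
  ⟨eq_reverse_of_opMatch_reverse, fun h => h ▸ opMatch_refl P⟩
end

section
/- For any two equal-length strings X and Y over a parameterized alphabet Π, X and Y parameterized match (there exists a bijection f on Π with f applied characterwise to Y equals X) if and only if their previous encodings are equal: PE_X = PE_Y. -/
/-!
The previous encoding and parameterized matching only see the equality pattern of a string,
i.e. which pairs of positions carry the same letter. A letter renaming preserves that pattern,
hence `pe`. Conversely, `PE_T[p]` locates the previous occurrence `m` of `T[p]`, and every earlier
position equal to `T[p]` is `m` itself or a position equal to `T[m]`; so by strong induction on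
`p`, equal encodings give equal patterns. Equal patterns make `Y[i] ↦ X[i]` a well-defined
injection on the finitely many letters of `Y`, which extends to a permutation of the alphabet.
-/

/-- previous-encoding value at (0-indexed) position `p`. -/
def peAt {π : Type*} [DecidableEq π] (T : List π) (p : ℕ) : ℕ :=
  match ((List.range p).filter (fun q => T[q]? = T[p]?)).max? with
  | some q => p - q
  | none => 0

/-- the previous encoding `PE_T` of `T`. -/
def pe {π : Type*} [DecidableEq π] (T : List π) : List ℕ :=
  (List.range T.length).map (peAt T)

theorem Set.InjOn.exists_perm_eqOn {α : Type*} {s : Set α} {f : α → α} (hf : s.InjOn f)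
    (hs : s.Finite) : ∃ g : Equiv.Perm α, s.EqOn g f := by
  let e : s ↪ α := ⟨s.domRestrict f, hf.injective⟩
  suffices ∃ g : Equiv.Perm α, ∀ x : s, g x = e x from
    this.imp fun g hg x hx => hg ⟨x, hx⟩
  rcases finite_or_infinite α with _ | _
  · exact Cardinal.extend_function_finite e ⟨Equiv.refl α⟩
  · exact Cardinal.extend_function_of_lt e
      ((Cardinal.lt_aleph0_iff_set_finite.2 hs).trans_le (Cardinal.aleph0_le_mk α))
      ⟨Equiv.refl α⟩

theorem List.exists_perm_map_eq_of_getElem?_eq_iff {α : Type*} {X Y : List α}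
    (hlen : X.length = Y.length) (hXY : ∀ i j : ℕ, X[i]? = X[j]? ↔ Y[i]? = Y[j]?) :
    ∃ g : Equiv.Perm α, X = Y.map g := by
  classical
  have hidx {a} (ha : a ∈ Y) : X[Y.idxOf a]? = some ((X[Y.idxOf a]?).getD a) := by
    rw [getElem?_eq_getElem (hlen ▸ idxOf_lt_length_of_mem ha)]; rfl
  have hf : {a | a ∈ Y}.InjOn fun a => (X[Y.idxOf a]?).getD a := by
    intro a ha b hb hab
    have := (hXY (Y.idxOf a) (Y.idxOf b)).1 (by rw [hidx ha, hidx hb]; exact congrArg some hab)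
    rwa [getElem?_idxOf ha, getElem?_idxOf hb, Option.some_inj] at this
  obtain ⟨g, hg⟩ := hf.exists_perm_eqOn Y.finite_toSet
  refine ⟨g, ext_getElem? fun i => ?_⟩
  rw [getElem?_map]
  rcases hi : Y[i]? with _ | a
  · rwa [Option.map_none, getElem?_eq_none_iff, hlen, ← getElem?_eq_none_iff]
  · have ha : a ∈ Y := mem_of_getElem? hi
    rw [Option.map_some, hg ha, ← hidx ha, hXY, getElem?_idxOf ha, hi]

section PrevOcc

variable {π : Type*} [DecidableEq π] {T X Y : List π} {p q m : ℕ}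

def prevOcc (T : List π) (p : ℕ) : Option ℕ :=
  ((List.range p).filter (fun q => T[q]? = T[p]?)).max?

theorem peAt_eq_sub_getD_prevOcc (T : List π) (p : ℕ) : peAt T p = p - (prevOcc T p).getD p := by
  unfold peAt prevOcc
  split <;> rename_i h <;> simp only [h, Option.getD_some, Option.getD_none, Nat.sub_self]

theorem mem_filter_prevOcc :
    q ∈ (List.range p).filter (fun q => T[q]? = T[p]?) ↔ q < p ∧ T[q]? = T[p]? := by
  simp

theorem lt_of_prevOcc_eq_some (h : prevOcc T p = some m) : m < p :=
  (mem_filter_prevOcc.1 (List.max?_mem h)).1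

theorem getElem?_eq_getElem?_iff_prevOcc (hq : q < p) :
    T[q]? = T[p]? ↔ ∃ m, prevOcc T p = some m ∧ (q = m ∨ q < m ∧ T[q]? = T[m]?) := by
  constructor
  · intro hqp
    have hmem : q ∈ (List.range p).filter (fun q => T[q]? = T[p]?) :=
      mem_filter_prevOcc.2 ⟨hq, hqp⟩
    obtain ⟨m, hm⟩ := Option.isSome_iff_exists.1 (List.isSome_max?_of_mem hmem)
    have hqm : q ≤ m := (List.max?_le_iff hm).1 le_rfl q hmem
    have hmp : T[m]? = T[p]? := (mem_filter_prevOcc.1 (List.max?_mem hm)).2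
    exact ⟨m, hm, hqm.eq_or_lt.imp id fun h => ⟨h, hqp.trans hmp.symm⟩⟩
  · rintro ⟨m, hm, hqm⟩
    have hmp : T[m]? = T[p]? := (mem_filter_prevOcc.1 (List.max?_mem hm)).2
    rcases hqm with rfl | ⟨-, hqm⟩
    · exact hmp
    · exact hqm.trans hmp

theorem prevOcc_eq_of_peAt_eq (h : peAt X p = peAt Y p) : prevOcc X p = prevOcc Y p := by
  rw [peAt_eq_sub_getD_prevOcc, peAt_eq_sub_getD_prevOcc] at h
  rcases hX : prevOcc X p with _ | a <;> rcases hY : prevOcc Y p with _ | b <;>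
    simp only [hX, hY, Option.getD_none, Option.getD_some] at h
  · rfl
  · have := lt_of_prevOcc_eq_some hY; omega
  · have := lt_of_prevOcc_eq_some hX; omega
  · have := lt_of_prevOcc_eq_some hX; have := lt_of_prevOcc_eq_some hY
    rw [Option.some_inj]; omega

end PrevOcc

section Pe

variable {π σ : Type*} [DecidableEq π] [DecidableEq σ] {X Y : List π} {p : ℕ}

@[simp]
theorem length_pe (T : List π) : (pe T).length = T.length := by
  simp [pe]

theorem getElem?_pe {T : List π} (hp : p < T.length) : (pe T)[p]? = some (peAt T p) := by
  simp [pe, hp]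

theorem pe_map_of_injective {f : π → σ} (hf : Function.Injective f) (T : List π) :
    pe (T.map f) = pe T := by
  simp [pe, peAt, List.getElem?_map, (Option.map_injective hf).eq_iff]

theorem length_eq_of_pe_eq (hpe : pe X = pe Y) : X.length = Y.length := by
  simpa using congrArg List.length hpe

theorem peAt_eq_of_pe_eq (hpe : pe X = pe Y) (hp : p < X.length) : peAt X p = peAt Y p := by
  rw [← Option.some_inj, ← getElem?_pe hp, hpe, getElem?_pe (length_eq_of_pe_eq hpe ▸ hp)]

theorem getElem?_eq_iff_of_pe_eq_of_lt (hpe : pe X = pe Y) (hp : p < X.length) :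
    ∀ q < p, (X[q]? = X[p]? ↔ Y[q]? = Y[p]?) := by
  induction p using Nat.strong_induction_on with
  | _ p ih =>
  intro q hq
  rw [getElem?_eq_getElem?_iff_prevOcc hq, getElem?_eq_getElem?_iff_prevOcc hq,
    ← prevOcc_eq_of_peAt_eq (peAt_eq_of_pe_eq hpe hp)]
  refine exists_congr fun m => and_congr_right fun hm => or_congr_right <|
    and_congr_right fun hqm => ?_
  have hmp := lt_of_prevOcc_eq_some hm
  exact ih m hmp (hmp.trans hp) q hqm

theorem getElem?_eq_iff_of_pe_eq (hpe : pe X = pe Y) (i j : ℕ) :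
    X[i]? = X[j]? ↔ Y[i]? = Y[j]? := by
  wlog hij : i < j generalizing i j
  · rcases (not_lt.1 hij).eq_or_lt with rfl | hji
    · simp
    · simpa only [eq_comm] using this j i hji
  by_cases hj : j < X.length
  · exact getElem?_eq_iff_of_pe_eq_of_lt hpe hj i hij
  · have hlen := length_eq_of_pe_eq hpe
    simp only [List.getElem?_eq_none (not_lt.1 hj), List.getElem?_eq_none (hlen ▸ not_lt.1 hj),
      List.getElem?_eq_none_iff, hlen]

end Pe

theorem stmt4_general {π : Type*} [DecidableEq π] (X Y : List π) :
    (∃ f : π ≃ π, X = Y.map f) ↔ pe X = pe Y := by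
  constructor
  · rintro ⟨f, rfl⟩
    exact pe_map_of_injective f.injective Y
  · intro hpe
    exact List.exists_perm_map_eq_of_getElem?_eq_iff (length_eq_of_pe_eq hpe)
      (getElem?_eq_iff_of_pe_eq hpe)

theorem stmt4 {π : Type*} [DecidableEq π] (X Y : List π) (h : X.length = Y.length) :
    (∃ f : π ≃ π, X = Y.map f) ↔ pe X = pe Y :=
  stmt4_general X Y
end

section
/- For any two equal-length strings X and Y over a linearly ordered alphabet, X and Y order-preserving match if and only if Code_X = Code_Y, where Code_T is the sequence of pairs (α_T[i], β_T[i]) for i = 1,...,|T|. -/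
/-- `α_T` value at (0-indexed) position `p`: rightmost occurrence of the largest
value `≤ T[p]` among the previous positions, reported 1-indexed, `0` if none. -/
def alphaAt {α : Type*} [LinearOrder α] [Inhabited α] (T : List α) (p : ℕ) : ℕ :=
  let v := fun q => T.getD q default
  let cand := (List.range p).filter (fun q => v q ≤ v p)
  match (cand.map v).max? with
  | none => 0
  | some m =>
    match (cand.filter (fun q => v q = m)).max? with
    | none => 0
    | some q => q + 1

/-- `β_T` value at (0-indexed) position `p`: rightmost occurrence of the smallest
value `≥ T[p]` among the previous positions, reported 1-indexed, `0` if none. -/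
def betaAt {α : Type*} [LinearOrder α] [Inhabited α] (T : List α) (p : ℕ) : ℕ :=
  let v := fun q => T.getD q default
  let cand := (List.range p).filter (fun q => v p ≤ v q)
  match (cand.map v).min? with
  | none => 0
  | some m =>
    match (cand.filter (fun q => v q = m)).max? with
    | none => 0
    | some q => q + 1

/-- the order-preserving code of `T`. -/
def code {α : Type*} [LinearOrder α] [Inhabited α] (T : List α) : List (ℕ × ℕ) :=
  (List.range T.length).map (fun p => (alphaAt T p, betaAt T p))

open OrderDual

section FloorPos

variable {β γ : Type*} [LinearOrder β] [LinearOrder γ]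

/-- The body of `alphaAt` for an arbitrary value sequence `v`; `betaAt` is the same for the
dual order, so both are handled at once. -/
def floorPos (v : ℕ → β) (p : ℕ) : ℕ :=
  let cand := (List.range p).filter (fun q => v q ≤ v p)
  match (cand.map v).max? with
  | none => 0
  | some m =>
    match (cand.filter (fun q => v q = m)).max? with
    | none => 0
    | some q => q + 1

def IsFloorPos (v : ℕ → β) (p q : ℕ) : Prop :=
  q < p ∧ v q ≤ v p ∧ ∀ r < p, v r ≤ v p → v r ≤ v q ∧ (v q ≤ v r → r ≤ q)

def SameOrderBelow (v : ℕ → β) (w : ℕ → γ) (n : ℕ) : Prop :=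
  ∀ i j, i < n → j < n → (v i ≤ v j ↔ w i ≤ w j)

theorem floorPos_spec (v : ℕ → β) (p : ℕ) :
    (floorPos v p = 0 ∧ ∀ q < p, ¬ v q ≤ v p) ∨
      ∃ q, floorPos v p = q + 1 ∧ IsFloorPos v p q := by
  set cand := (List.range p).filter (fun q => v q ≤ v p) with hcand
  have mem_cand {q : ℕ} : q ∈ cand ↔ q < p ∧ v q ≤ v p := by simp [hcand]
  have hval : floorPos v p = match (cand.map v).max? with
      | none => 0
      | some m =>
        match (cand.filter (fun q => v q = m)).max? with
        | none => 0
        | some q => q + 1 := rfl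
  rcases hm : (cand.map v).max? with _ | m
  · rw [List.max?_eq_none_iff, List.map_eq_nil_iff] at hm
    refine .inl ⟨by simp [hval, hm], fun q hq hle => ?_⟩
    simpa [hm] using mem_cand.mpr ⟨hq, hle⟩
  · have hmax : ∀ r ∈ cand, v r ≤ m := fun r hr =>
      (List.max?_le_iff hm).mp le_rfl _ (List.mem_map_of_mem hr)
    obtain ⟨q₀, hq₀, rfl⟩ := List.mem_map.mp (List.max?_mem hm)
    rcases hq : (cand.filter (fun q => v q = v q₀)).max? with _ | q
    · simp only [List.max?_eq_none_iff, List.filter_eq_nil_iff, decide_eq_true_eq] at hq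
      exact absurd rfl (hq q₀ hq₀)
    · have hqmem := List.max?_mem hq
      have hqmax := (List.max?_le_iff hq).mp le_rfl
      simp only [List.mem_filter, decide_eq_true_eq] at hqmem hqmax
      obtain ⟨hqp, hqle⟩ := mem_cand.mp hqmem.1
      refine .inr ⟨q, by simp [hval, hm, hq], hqp, hqle, fun r hr hrle => ?_⟩
      have hrc := mem_cand.mpr ⟨hr, hrle⟩
      rw [hqmem.2]
      exact ⟨hmax r hrc, fun h => hqmax r ⟨hrc, le_antisymm (hmax r hrc) h⟩⟩

theorem IsFloorPos.unique {v : ℕ → β} {p q q' : ℕ} (h : IsFloorPos v p q)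
    (h' : IsFloorPos v p q') : q = q' := by
  obtain ⟨hq, hqp, hmax⟩ := h
  obtain ⟨hq', hqp', hmax'⟩ := h'
  exact le_antisymm ((hmax' q hq hqp).2 (hmax q' hq' hqp').1)
    ((hmax q' hq' hqp').2 (hmax' q hq hqp).1)

theorem floorPos_eq_succ_iff {v : ℕ → β} {p q : ℕ} :
    floorPos v p = q + 1 ↔ IsFloorPos v p q := by
  rcases floorPos_spec v p with ⟨h0, hnone⟩ | ⟨q', hq', hfloor⟩
  · exact ⟨fun h => by omega, fun h => absurd h.2.1 (hnone q h.1)⟩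
  · rw [hq', Nat.succ_inj]
    exact ⟨fun h => h ▸ hfloor, hfloor.unique⟩

theorem floorPos_eq_zero_iff {v : ℕ → β} {p : ℕ} :
    floorPos v p = 0 ↔ ∀ q < p, ¬ v q ≤ v p := by
  rcases floorPos_spec v p with ⟨h0, hnone⟩ | ⟨q, hq, hfloor⟩
  · exact iff_of_true h0 hnone
  · exact iff_of_false (by omega) fun hnone => hnone q hfloor.1 hfloor.2.1

theorem SameOrderBelow.mono {v : ℕ → β} {w : ℕ → γ} {m n : ℕ} (h : SameOrderBelow v w n)
    (hmn : m ≤ n) : SameOrderBelow v w m :=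
  fun i j hi hj => h i j (by omega) (by omega)

theorem SameOrderBelow.dual {v : ℕ → β} {w : ℕ → γ} {n : ℕ} (h : SameOrderBelow v w n) :
    SameOrderBelow (toDual ∘ v) (toDual ∘ w) n :=
  fun i j hi hj => h j i hj hi

theorem isFloorPos_congr {v : ℕ → β} {w : ℕ → γ} {p q : ℕ} (h : SameOrderBelow v w (p + 1)) :
    IsFloorPos v p q ↔ IsFloorPos w p q := by
  unfold IsFloorPos
  refine and_congr_right fun hq => ?_
  have cmp {i j : ℕ} (hi : i ≤ p) (hj : j ≤ p) := h i j (by omega) (by omega)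
  rw [cmp hq.le le_rfl]
  refine and_congr_right fun _ => forall₂_congr fun r hr => ?_
  rw [cmp hr.le le_rfl, cmp hr.le hq.le, cmp hq.le hr.le]

theorem floorPos_congr {v : ℕ → β} {w : ℕ → γ} {p : ℕ} (h : SameOrderBelow v w (p + 1)) :
    floorPos v p = floorPos w p := by
  rcases hv : floorPos v p with _ | q
  · rw [eq_comm, floorPos_eq_zero_iff]
    rw [floorPos_eq_zero_iff] at hv
    exact fun q hq => (h q p (by omega) p.lt_succ_self).not.mp (hv q hq)
  · rw [eq_comm, floorPos_eq_succ_iff, ← isFloorPos_congr h]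
    exact floorPos_eq_succ_iff.mp hv

theorem le_iff_le_of_floorPos_eq {v : ℕ → β} {w : ℕ → γ} {p : ℕ} (h : SameOrderBelow v w p)
    (hfloor : floorPos v p = floorPos w p) : ∀ i < p, v i ≤ v p ↔ w i ≤ w p := by
  intro i hi
  rcases hv : floorPos v p with _ | q
  · rw [hv, eq_comm, floorPos_eq_zero_iff] at hfloor
    exact iff_of_false (floorPos_eq_zero_iff.mp hv i hi) (hfloor i hi)
  · rw [hv, eq_comm, floorPos_eq_succ_iff] at hfloor
    obtain ⟨hq, hqv, hmaxv⟩ := floorPos_eq_succ_iff.mp hv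
    obtain ⟨-, hqw, hmaxw⟩ := hfloor
    constructor
    · exact fun hi' => ((h i q hi hq).mp (hmaxv i hi hi').1).trans hqw
    · exact fun hi' => ((h i q hi hq).mpr (hmaxw i hi hi').1).trans hqv

theorem SameOrderBelow.succ {v : ℕ → β} {w : ℕ → γ} {n : ℕ} (h : SameOrderBelow v w n)
    (hfloor : floorPos v n = floorPos w n)
    (hceil : floorPos (toDual ∘ v) n = floorPos (toDual ∘ w) n) :
    SameOrderBelow v w (n + 1) := by
  have below := le_iff_le_of_floorPos_eq h hfloor
  have above := le_iff_le_of_floorPos_eq h.dual hceil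
  intro i j hi hj
  rcases (Nat.lt_succ_iff_lt_or_eq.mp hi), (Nat.lt_succ_iff_lt_or_eq.mp hj) with
    ⟨hi | rfl, hj | rfl⟩
  · exact h i j hi hj
  · exact below i hi
  · exact above j hj
  · exact iff_of_true le_rfl le_rfl

theorem sameOrderBelow_iff_floorPos_eq {v : ℕ → β} {w : ℕ → γ} {n : ℕ} :
    SameOrderBelow v w n ↔ ∀ p < n, floorPos v p = floorPos w p ∧
      floorPos (toDual ∘ v) p = floorPos (toDual ∘ w) p := by
  refine ⟨fun h p hp => ?_, fun h => ?_⟩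
  · have h' := h.mono (Nat.succ_le_of_lt hp)
    exact ⟨floorPos_congr h', floorPos_congr h'.dual⟩
  · induction n with
    | zero => exact fun i _ hi _ => absurd hi (Nat.not_lt_zero i)
    | succ n ih =>
      obtain ⟨hfloor, hceil⟩ := h n n.lt_succ_self
      exact (ih fun p hp => h p (by omega)).succ hfloor hceil

end FloorPos

theorem alphaAt_eq_floorPos {α : Type*} [LinearOrder α] [Inhabited α] (T : List α) (p : ℕ) :
    alphaAt T p = floorPos (T.getD · default) p :=
  rfl

theorem betaAt_eq_floorPos_toDual {α : Type*} [LinearOrder α] [Inhabited α] (T : List α)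
    (p : ℕ) : betaAt T p = floorPos (toDual ∘ (T.getD · default)) p :=
  rfl

theorem code_eq_code_iff {α : Type*} [LinearOrder α] [Inhabited α] {X Y : List α}
    (h : X.length = Y.length) :
    code X = code Y ↔ ∀ p < X.length, alphaAt X p = alphaAt Y p ∧ betaAt X p = betaAt Y p := by
  simp only [code, ← h, List.map_inj_left, List.mem_range, Prod.mk.injEq]

theorem stmt6 {α : Type*} [LinearOrder α] [Inhabited α] (X Y : List α)
    (h : X.length = Y.length) :
    opMatch X Y ↔ code X = code Y := by
  rw [code_eq_code_iff h]
  simp only [alphaAt_eq_floorPos, betaAt_eq_floorPos_toDual]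
  exact (and_iff_right h).trans sameOrderBelow_iff_floorPos_eq
end

section
/- Suppose T[i..j] is a parameterized rev-palindrome (T[i..j] ≈para reverse(T[i..j])) with 1 < i and j < n. Then T[i−1..j+1] is a parameterized rev-palindrome if and only if the last elements of the previous encodings agree: PE_{T[i−1..j+1]}[j−i+3] = PE_{reverse(T[i−1..j+1])}[j−i+3]. -/
/-- `X` and `Y` parameterized match: a bijection of the alphabet sends `Y` to `X`. -/
def pmatch {π : Type*} (X Y : List π) : Prop := ∃ f : π ≃ π, X = Y.map f

universe u

theorem Set.Finite.exists_equiv_extend {α β : Type*} {s : Set α} (hs : s.Finite) (f : s ↪ β)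
    (h : Nonempty (α ≃ β)) : ∃ g : α ≃ β, ∀ x : s, g x = f x := by
  cases finite_or_infinite α
  · exact Cardinal.extend_function_finite f h
  · exact Cardinal.extend_function_of_lt f (hs.lt_aleph0.trans_le (Cardinal.aleph0_le_mk α)) h

section Lists
variable {α : Type u}

theorem List.getElem?_reverse_of_length_eq {W : List α} {n : ℕ} (hW : W.length = n + 1)
    {k : ℕ} (hk : k ≤ n) : W.reverse[k]? = W[n - k]? := by
  rw [List.getElem?_reverse (by omega), hW, Nat.add_sub_cancel]

theorem List.getElem?_cons_append_singleton {a b : α} {S : List α} {k : ℕ} (hk : 0 < k)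
    (hkS : k ≤ S.length) : (a :: S ++ [b])[k]? = S[k - 1]? := by
  obtain ⟨k, rfl⟩ := Nat.exists_eq_succ_of_ne_zero hk.ne'
  simp [List.getElem?_append_left (show k < S.length by omega)]

theorem length_sub {S : List α} {i j : ℕ} (hi : 1 ≤ i) (hij : i ≤ j) (hj : j < S.length) :
    (sub S i j).length = j - i + 1 := by
  simp only [sub, List.length_take, List.length_drop]
  omega

theorem sub_pred_succ {S : List α} {i j : ℕ} (hi : 2 ≤ i) (hij : i ≤ j) (hj : j < S.length) :
    sub S (i - 1) (j + 1) = S[i - 2] :: sub S i j ++ [S[j]] := by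
  have e1 : j + 1 - (i - 1) + 1 = j - i + 1 + 1 + 1 := by omega
  have e2 : i - 1 - 1 = i - 2 := by omega
  have e3 : i - 1 = i - 2 + 1 := by omega
  have e4 : i - 2 + 1 + (j - i + 1) = j := by omega
  rw [sub, sub, e1, e2, e3, List.drop_eq_getElem_cons (show i - 2 < S.length by omega),
    List.take_succ_cons, List.take_add_one, List.getElem?_drop, e4, List.getElem?_eq_getElem hj]
  rfl

end Lists

section ParameterizedMatch
variable {π : Type u} {X Y : List π}

theorem pmatch.length_eq (h : pmatch X Y) : X.length = Y.length := by
  obtain ⟨f, rfl⟩ := h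
  exact List.length_map f

theorem pmatch.getElem?_eq_iff (h : pmatch X Y) (p q : ℕ) :
    X[p]? = X[q]? ↔ Y[p]? = Y[q]? := by
  obtain ⟨f, rfl⟩ := h
  simp only [List.getElem?_map]
  exact (Option.map_injective f.injective).eq_iff

theorem pmatch_iff : pmatch X Y ↔ X.length = Y.length ∧
    ∀ p < X.length, ∀ q < X.length, (X[p]? = X[q]? ↔ Y[p]? = Y[q]?) := by
  refine ⟨fun h => ⟨h.length_eq, fun p _ q _ => h.getElem?_eq_iff p q⟩, ?_⟩
  rintro ⟨hlen, hpat⟩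
  classical
  have hidx {y : π} (hy : y ∈ Y) : Y.idxOf y < X.length := hlen ▸ List.idxOf_lt_length_of_mem hy
  let f : {y | y ∈ Y} ↪ π :=
    ⟨fun y => X[Y.idxOf y.1]'(hidx y.2), fun a b hab => by
      have h := (hpat _ (hidx a.2) _ (hidx b.2)).1 (by
        simp [List.getElem?_eq_getElem (hidx a.2), List.getElem?_eq_getElem (hidx b.2), hab])
      rw [List.getElem?_idxOf a.2, List.getElem?_idxOf b.2] at h
      exact Subtype.ext (Option.some.inj h)⟩
  obtain ⟨g, hg⟩ := Y.finite_toSet.exists_equiv_extend f ⟨Equiv.refl π⟩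
  refine ⟨g, List.ext_getElem (by simp [hlen]) fun p hpX hpY => ?_⟩
  have hy : Y[p] ∈ Y := List.getElem_mem _
  rw [List.getElem_map, hg ⟨Y[p], hy⟩]
  have h := (hpat p hpX _ (hidx hy)).2 (by rw [List.getElem?_idxOf hy, List.getElem?_eq_getElem])
  simpa [f, List.getElem?_eq_getElem hpX, List.getElem?_eq_getElem (hidx hy)] using h

end ParameterizedMatch

section PreviousEncoding
variable {π : Type u} [DecidableEq π] {X Y L W : List π} {p q n : ℕ}

theorem pmatch.peAt_eq (h : pmatch X Y) (p : ℕ) : peAt X p = peAt Y p := by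
  unfold peAt
  rw [List.filter_congr fun q _ => by rw [decide_eq_decide.2 (h.getElem?_eq_iff q p)]]

theorem pe_getD (hp : p < L.length) : (pe L).getD p 0 = peAt L p := by
  simp [pe, List.getD_eq_getElem?_getD, hp]

theorem pos_peAt_and_le_sub_peAt (hqp : q < p) (h : L[q]? = L[p]?) :
    0 < peAt L p ∧ q ≤ p - peAt L p := by
  have hmem : q ∈ (List.range p).filter (fun r => L[r]? = L[p]?) := by simp [hqp, h]
  unfold peAt
  rcases hmax : ((List.range p).filter (fun r => L[r]? = L[p]?)).max? with _ | r
  · simp [List.max?_eq_none_iff.1 hmax] at hmem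
  · obtain ⟨hr, hle⟩ := List.max?_eq_some_iff.1 hmax
    have := hle q hmem
    simp only [List.mem_filter, List.mem_range] at hr
    show 0 < p - r ∧ q ≤ p - (p - r)
    omega

theorem getElem?_sub_peAt (h : 0 < peAt L p) : L[p - peAt L p]? = L[p]? := by
  revert h
  unfold peAt
  rcases hmax : ((List.range p).filter (fun r => L[r]? = L[p]?)).max? with _ | r
  · simp
  · obtain ⟨hr, -⟩ := List.max?_eq_some_iff.1 hmax
    simp only [List.mem_filter, List.mem_range, decide_eq_true_eq] at hr
    intro _
    rw [Nat.sub_sub_self hr.1.le, hr.2]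

theorem getElem?_reverse_zero_eq_of_peAt_eq (hW : W.length = n + 1)
    (hpal : ∀ p q, 0 < p → p < n → 0 < q → q < n →
      (W[p]? = W[q]? ↔ W.reverse[p]? = W.reverse[q]?))
    (hpe : peAt W n = peAt W.reverse n) {q : ℕ} (hq : 0 < q) (hqn : q < n)
    (h : W[0]? = W[q]?) : W.reverse[0]? = W.reverse[q]? := by
  have hrev {k : ℕ} (hk : k ≤ n) := List.getElem?_reverse_of_length_eq hW hk
  set d := peAt W.reverse n
  obtain ⟨hd, hqd⟩ : 0 < d ∧ n - q ≤ n - d :=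
    pos_peAt_and_le_sub_peAt (q := n - q) (by omega) (by
      rw [hrev (by omega), hrev le_rfl, Nat.sub_sub_self hqn.le, Nat.sub_self, h])
  have hdq : d ≤ q := by omega
  have h0d : W[0]? = W[d]? := by
    have := getElem?_sub_peAt hd
    rwa [hrev (by omega), hrev le_rfl, Nat.sub_sub_self (by omega), Nat.sub_self, eq_comm] at this
  have hr0d : W.reverse[0]? = W.reverse[d]? := by
    have := getElem?_sub_peAt (hpe ▸ hd : 0 < peAt W n)
    rw [hpe] at this
    rw [hrev n.zero_le, hrev (by omega), Nat.sub_zero, this]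
  rw [hr0d]
  exact (hpal d q hd (by omega) hq hqn).1 (h0d.symm.trans h)

theorem pmatch_reverse_of_peAt_eq (hW : W.length = n + 1)
    (hpal : ∀ p q, 0 < p → p < n → 0 < q → q < n →
      (W[p]? = W[q]? ↔ W.reverse[p]? = W.reverse[q]?))
    (hpe : peAt W n = peAt W.reverse n) : pmatch W W.reverse := by
  have hrev {k : ℕ} (hk : k ≤ n) := List.getElem?_reverse_of_length_eq hW hk
  have h0 {q : ℕ} (hq : 0 < q) (hqn : q < n) :
      W[0]? = W[q]? ↔ W.reverse[0]? = W.reverse[q]? := by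
    refine ⟨getElem?_reverse_zero_eq_of_peAt_eq hW hpal hpe hq hqn, fun h => ?_⟩
    simpa using getElem?_reverse_zero_eq_of_peAt_eq (W := W.reverse) (by simpa)
      (fun p q hp hpn hq hqn => by simpa using (hpal p q hp hpn hq hqn).symm)
      (by simpa using hpe.symm) hq hqn h
  refine pmatch_iff.2 ⟨W.length_reverse.symm, fun p hp q hq => ?_⟩
  wlog hpq : p ≤ q generalizing p q
  · exact eq_comm.trans ((this q hq p hp (by omega)).trans eq_comm)
  rcases hpq.eq_or_lt with rfl | hpq
  · simp
  obtain hqn | hqn : q < n ∨ q = n := by omega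
  · obtain rfl | hp0 := p.eq_zero_or_pos
    · exact h0 hpq hqn
    · exact hpal p q hp0 (by omega) (by omega) hqn
  subst q
  obtain rfl | hp0 := p.eq_zero_or_pos
  · rw [hrev n.zero_le, hrev le_rfl, Nat.sub_zero, Nat.sub_self, eq_comm]
  · have := h0 (q := n - p) (by omega) (by omega)
    rw [hrev n.zero_le, hrev (Nat.sub_le n p), Nat.sub_zero, Nat.sub_sub_self hpq.le] at this
    rw [hrev hpq.le, hrev le_rfl, Nat.sub_self]
    exact eq_comm.trans (this.symm.trans eq_comm)

theorem pmatch_cons_append_reverse_iff {S : List π} (hS : pmatch S S.reverse) (a b : π) :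
    pmatch (a :: S ++ [b]) (a :: S ++ [b]).reverse ↔
      peAt (a :: S ++ [b]) (S.length + 1) = peAt (a :: S ++ [b]).reverse (S.length + 1) := by
  refine ⟨fun h => h.peAt_eq _, fun hpe => pmatch_reverse_of_peAt_eq (by simp) ?_ hpe⟩
  intro p q hp hpn hq hqn
  have hrev : (a :: S ++ [b]).reverse = b :: S.reverse ++ [a] := by simp
  rw [hrev, List.getElem?_cons_append_singleton hp (by omega),
    List.getElem?_cons_append_singleton hq (by omega),
    List.getElem?_cons_append_singleton hp (by rw [List.length_reverse]; omega),
    List.getElem?_cons_append_singleton hq (by rw [List.length_reverse]; omega)]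
  exact hS.getElem?_eq_iff _ _

end PreviousEncoding

theorem stmt17 {π : Type*} [DecidableEq π] (T : List π) (i j : ℕ)
    (h2 : 2 ≤ i) (hij : i ≤ j) (hj : j < T.length)
    (hp : pmatch (sub T i j) (sub T i j).reverse) :
    pmatch (sub T (i - 1) (j + 1)) (sub T (i - 1) (j + 1)).reverse ↔
      (pe (sub T (i - 1) (j + 1))).getD (j - i + 2) 0 =
        (pe ((sub T (i - 1) (j + 1)).reverse)).getD (j - i + 2) 0 := by
  have hlen : (sub T i j).length = j - i + 1 := length_sub (by omega) hij hj
  rw [sub_pred_succ h2 hij hj, pe_getD (by simp [hlen]), pe_getD (by simp [hlen]),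
    show j - i + 2 = (sub T i j).length + 1 by omega]
  exact pmatch_cons_append_reverse_iff hp _ _
end
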